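/- Let Γ be a group of isometries of a proper, length metric space X acting discretely and freely. Then the map Π : Loc-Geod(X) → Loc-Geod(Γ\X) defined by Π(γ) = π∘γ is continuous, surjective and Γ-equivariant, and the induced map Π̄ : Γ\Loc-Geod(X) → Loc-Geod(Γ\X) is a homeomorphism. -/

import Mathlib

open Filter Metric Set MeasureTheory Topology
open scoped ENNReal NNReal

noncomputable section

namespace Paper

variable {X : Type*} [MetricSpace X]

/-- The Gromov product `(y,z)_x`. -/
def gromov (x y z : X) : ℝ := (dist x y + dist x z - dist y z) / 2

/-- `δ`-hyperbolicity via the four points condition on Gromov products. -/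
def IsHyperbolic (X : Type*) [MetricSpace X] (δ : ℝ) : Prop :=
  ∀ w x y z : X, min (gromov w x y) (gromov w y z) - δ ≤ gromov w x z

/-- `X` is `P₀`-packed at scale `r₀`: every closed ball of radius `3r₀` contains at most `P₀`
points that are pairwise `2r₀`-separated. -/
def IsPacked (X : Type*) [MetricSpace X] (P₀ : ℕ) (r₀ : ℝ) : Prop :=
  ∀ (x : X) (s : Finset X), (↑s : Set X) ⊆ Metric.closedBall x (3 * r₀) →
    (∀ y ∈ s, ∀ z ∈ s, y ≠ z → 2 * r₀ < dist y z) → s.card ≤ P₀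

/-- A `σ`-geodesic line: an isometric line all whose subsegments are `σ`-geodesics. -/
structure IsSigmaGeodLine (σ : X → X → ℝ → X) (γ : ℝ → X) : Prop where
  isom : Isometry γ
  seg : ∀ s t : ℝ, s ≤ t → ∀ l ∈ Set.Icc (0:ℝ) 1, σ (γ s) (γ t) l = γ (s + l * (t - s))

/-- `(X,σ)` is a GCB-space: `σ` is a convex, consistent, reversible, geodesically complete
geodesic bicombing on the (complete) metric space `X`. -/
structure IsGCB (σ : X → X → ℝ → X) : Prop where
  source : ∀ x y : X, σ x y 0 = x
  target : ∀ x y : X, σ x y 1 = y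
  propor : ∀ x y : X, ∀ s ∈ Set.Icc (0:ℝ) 1, ∀ t ∈ Set.Icc (0:ℝ) 1,
    dist (σ x y s) (σ x y t) = |s - t| * dist x y
  convex : ∀ x y x' y' : X, ConvexOn ℝ (Set.Icc (0:ℝ) 1) fun t => dist (σ x y t) (σ x' y' t)
  consistent : ∀ x y : X, ∀ s t : ℝ, 0 ≤ s → s ≤ t → t ≤ 1 → ∀ l ∈ Set.Icc (0:ℝ) 1,
    σ (σ x y s) (σ x y t) l = σ x y ((1 - l) * s + l * t)
  reversible : ∀ x y : X, ∀ t ∈ Set.Icc (0:ℝ) 1, σ x y t = σ y x (1 - t)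
  geodComplete : ∀ x y : X, ∃ γ : ℝ → X, IsSigmaGeodLine σ γ ∧ ∃ a b : ℝ, a ≤ b ∧
    b - a = dist x y ∧ ∀ l ∈ Set.Icc (0:ℝ) 1, γ (a + l * (b - a)) = σ x y l

section Group

variable (G : Type*) [Group G] [MulAction G X]

/-- A group of isometries is discrete if orbits meet balls in finitely many elements. -/
def DiscreteAction (X : Type*) [MetricSpace X] [MulAction G X] : Prop :=
  ∀ (x : X) (R : ℝ), {g : G | dist x (g • x) ≤ R}.Finite

/-- The action is free. -/
def FreeAction (X : Type*) [MetricSpace X] [MulAction G X] : Prop :=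
  ∀ (g : G) (x : X), g • x = x → g = 1

/-- `Γ` acts by `σ`-isometries. -/
def SigmaEquivariant (σ : X → X → ℝ → X) : Prop :=
  ∀ (g : G) (x y : X), ∀ t ∈ Set.Icc (0:ℝ) 1, g • σ x y t = σ (g • x) (g • y) t

/-- The number of orbit points in the open ball `B(x,T)`. -/
def orbitCount (x : X) (T : ℝ) : ℕ :=
  Nat.card {y : X // y ∈ MulAction.orbit G x ∧ dist x y < T}

/-- The critical exponent `h_Γ = limsup (1/T) log #(Γx ∩ B(x,T))`. -/
def critExp (x : X) : EReal :=
  limsup (fun T : ℝ => ((Real.log (orbitCount G x T) / T : ℝ) : EReal)) atTop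

end Group

/-- The quotient space `Γ\X`. -/
def QuotX (G : Type*) (X : Type*) [Group G] [MulAction G X] [MetricSpace X] :=
  Quotient (MulAction.orbitRel G X)

section Quot

variable (G : Type*) [Group G] [MulAction G X] [IsIsometricSMul G X]

private lemma bddb (x y : X) : BddBelow (Set.range fun g : G => dist x (g • y)) :=
  ⟨0, by rintro _ ⟨g, rfl⟩; exact dist_nonneg⟩

/-- The quotient distance `d(πx,πy) = inf_g d(x, g·y)`. -/
def qdist (a b : QuotX G X) : ℝ :=
  ⨅ g : G, dist (Quotient.out a) (g • Quotient.out b)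

private lemma qdist_self (a : QuotX G X) : qdist G a a = 0 := by
  refine le_antisymm ?_ (le_ciInf fun g => dist_nonneg)
  have h := ciInf_le (bddb G (Quotient.out a) (Quotient.out a)) (1 : G)
  simp at h
  exact h

private lemma qdist_comm_le (a b : QuotX G X) : qdist G a b ≤ qdist G b a := by
  refine le_ciInf fun g => ?_
  have h := ciInf_le (bddb G (Quotient.out a) (Quotient.out b)) g⁻¹
  refine h.trans_eq ?_
  rw [← dist_smul g (Quotient.out a) (g⁻¹ • Quotient.out b), smul_inv_smul, dist_comm]

private lemma qdist_triangle (a b c : QuotX G X) :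
    qdist G a c ≤ qdist G a b + qdist G b c := by
  refine le_of_forall_pos_le_add fun ε hε => ?_
  have h1 : qdist G a b < qdist G a b + ε / 2 := lt_add_of_pos_right _ (half_pos hε)
  have h2 : qdist G b c < qdist G b c + ε / 2 := lt_add_of_pos_right _ (half_pos hε)
  obtain ⟨g, hg⟩ := exists_lt_of_ciInf_lt h1
  obtain ⟨h, hh⟩ := exists_lt_of_ciInf_lt h2
  have key : qdist G a c ≤ dist (Quotient.out a) ((g * h) • Quotient.out c) :=
    ciInf_le (bddb G _ _) (g * h)
  have e : dist (g • Quotient.out b) ((g * h) • Quotient.out c)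
      = dist (Quotient.out b) (h • Quotient.out c) := by
    rw [mul_smul, dist_smul]
  have tri := dist_triangle (Quotient.out a) (g • Quotient.out b) ((g * h) • Quotient.out c)
  rw [e] at tri
  have := key.trans tri
  linarith

/-- The quotient pseudometric on `Γ\X` (a genuine metric whenever the action is discrete
and free). -/
instance : PseudoMetricSpace (QuotX G X) where
  dist := qdist G
  dist_self := qdist_self G
  dist_comm a b := le_antisymm (qdist_comm_le G a b) (qdist_comm_le G b a)
  dist_triangle := qdist_triangle G

/-- The projection `π : X → Γ\X`. -/
def projQ (x : X) : QuotX G X := Quotient.mk (MulAction.orbitRel G X) x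

lemma projQ_dist_le (x y : X) : dist (projQ G x) (projQ G y) ≤ dist x y := by
  obtain ⟨k, hk⟩ := MulAction.mem_orbit_iff.mp
    ((MulAction.orbitRel_apply (G := G)).mp (Quotient.mk_out (s := MulAction.orbitRel G X) x))
  obtain ⟨l, hl⟩ := MulAction.mem_orbit_iff.mp
    ((MulAction.orbitRel_apply (G := G)).mp (Quotient.mk_out (s := MulAction.orbitRel G X) y))
  have h1 : dist (projQ G x) (projQ G y)
      ≤ dist (Quotient.out (projQ G x)) ((k * l⁻¹) • Quotient.out (projQ G y)) :=
    ciInf_le (bddb G _ _) (k * l⁻¹)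
  have hk2 : Quotient.out (projQ G x) = k • x := hk.symm
  have hl2 : Quotient.out (projQ G y) = l • y := hl.symm
  rw [hk2, hl2, smul_smul, inv_mul_cancel_right, dist_smul] at h1
  exact h1

/-- `π` as a continuous (1-Lipschitz) map. -/
def projCM : C(X, QuotX G X) :=
  ⟨projQ G, (LipschitzWith.of_dist_le_mul (K := 1) fun a b => by
    simpa using projQ_dist_le G a b).continuous⟩

end Quot

end Paper

namespace Paper

variable {X : Type*} [MetricSpace X]

/-- The space of local geodesic lines of a (pseudo)metric space `Y`, as a subset of the space
of continuous maps `ℝ → Y` (with the topology of uniform convergence on compact sets). -/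
def LocGeodSet (Y : Type*) [PseudoMetricSpace Y] : Set C(ℝ, Y) :=
  {γ | ∀ t : ℝ, ∃ ε > 0, ∀ s ∈ Set.Icc (t - ε) (t + ε), ∀ u ∈ Set.Icc (t - ε) (t + ε),
    dist (γ s) (γ u) = |s - u|}

/-- The set of (parametrized) `σ`-geodesic lines of `X`. -/
def SigmaGeodLines (σ : X → X → ℝ → X) : Set C(ℝ, X) := {γ | IsSigmaGeodLine σ ⇑γ}

section Proj

variable (G : Type*) [Group G] [MulAction G X] [IsIsometricSMul G X]

/-- Post-composition with the projection `π : X → Γ\X`. -/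
def projComp (γ : C(ℝ, X)) : C(ℝ, QuotX G X) := (projCM G).comp γ

/-- The space `Loc-Geod_σ(Γ\X)`: the image of the `σ`-geodesic lines of `X` under `Π`. -/
def LocGeodQuotSet (σ : X → X → ℝ → X) : Set C(ℝ, QuotX G X) :=
  projComp G '' SigmaGeodLines σ

end Proj

/-- Translation of `ℝ` by `c`, as a continuous map. -/
def trCM (c : ℝ) : C(ℝ, ℝ) := ⟨fun t => t + c, continuous_add_right c⟩

/-- The reparametrization flow `Φ_c γ = γ(· + c)`. -/
def shiftCM {Y : Type*} [TopologicalSpace Y] (c : ℝ) (γ : C(ℝ, Y)) : C(ℝ, Y) := γ.comp (trCM c)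

lemma shift_sigma {σ : X → X → ℝ → X} (c : ℝ) {γ : ℝ → X} (h : IsSigmaGeodLine σ γ) :
    IsSigmaGeodLine σ fun t => γ (t + c) := by
  constructor
  · exact h.isom.comp (Isometry.of_dist_eq fun a b => dist_add_right a b c)
  · intro s t hst l hl
    have h2 := h.seg (s + c) (t + c) (by linarith) l hl
    calc σ (γ (s + c)) (γ (t + c)) l = γ (s + c + l * (t + c - (s + c))) := h2
    _ = γ (s + l * (t - s) + c) := by ring_nf

section Flow

variable (G : Type*) [Group G] [MulAction G X] [IsIsometricSMul G X]

lemma shift_mem {σ : X → X → ℝ → X} (c : ℝ) {γ : C(ℝ, QuotX G X)}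
    (h : γ ∈ LocGeodQuotSet G σ) : shiftCM c γ ∈ LocGeodQuotSet G σ := by
  obtain ⟨γ', hγ', rfl⟩ := h
  exact ⟨shiftCM c γ', shift_sigma c hγ', ContinuousMap.ext fun t => rfl⟩

/-- The time-one map `Φ₁` of the reparametrization flow on `Loc-Geod_σ(Γ\X)`. -/
def flowOne (σ : X → X → ℝ → X) : ↥(LocGeodQuotSet G σ) → ↥(LocGeodQuotSet G σ) :=
  fun γ => ⟨shiftCM 1 γ.1, shift_mem G 1 γ.2⟩

end Flow

/-- The class `F` of admissible weight functions. -/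
structure AdmissibleF (f : ℝ → ℝ) : Prop where
  cont : Continuous f
  pos : ∀ s, 0 < f s
  symm : ∀ s : ℝ, f (-s) = f s
  integrable : MeasureTheory.Integrable f
  mass : ∫ s, f s = 1
  momentIntegrable : MeasureTheory.Integrable fun s : ℝ => 2 * |s| * f s

/-- The constant `C(f) = ∫ 2|s| f(s) ds`. -/
def Cf (f : ℝ → ℝ) : ℝ := ∫ s : ℝ, 2 * |s| * f s

/-- The distance `f(γ,γ') = ∫ d(γ(s),γ'(s)) f(s) ds` on spaces of (local) geodesics. -/
def fDist (f : ℝ → ℝ) {Y : Type*} [PseudoMetricSpace Y] (γ γ' : C(ℝ, Y)) : ℝ :=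
  ∫ s : ℝ, dist (γ s) (γ' s) * f s

section Dynamics

variable {Y : Type*}

/-- The dynamical distance `d^n(y,y') = max_{0 ≤ i ≤ n-1} d(T^i y, T^i y')`. -/
def dynDist (d : Y → Y → ℝ) (T : Y → Y) (n : ℕ) (a b : Y) : ℝ :=
  ⨆ i : Fin n, d (T^[(i : ℕ)] a) (T^[(i : ℕ)] b)

/-- The dynamical ball `B_{d^n}(a,r)`. -/
def dynBall (d : Y → Y → ℝ) (T : Y → Y) (n : ℕ) (a : Y) (r : ℝ) : Set Y :=
  {b | dynDist d T n a b < r}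

/-- The covering number of `K` at scale `r` with respect to a distance function `d`. -/
def covNum (d : Y → Y → ℝ) (K : Set Y) (r : ℝ) : ℕ :=
  sInf {m : ℕ | ∃ c : Fin m → Y, K ⊆ ⋃ i, {b | d (c i) b < r}}

/-- The Bowen entropy of `K` w.r.t. `d`: `lim_{r→0} limsup_n (1/n) log Cov_{d^n}(K,r)`. -/
def covEntropy (d : Y → Y → ℝ) (T : Y → Y) (K : Set Y) : EReal :=
  ⨆ r : {r : ℝ // 0 < r},
    limsup (fun n : ℕ => ((Real.log (covNum (dynDist d T n) K r.1) / n : ℝ) : EReal)) atTop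

/-- The entropy of (the join of the first `n` iterates of) a finite measurable partition. -/
def partitionEnt [MeasurableSpace Y] (μ : Measure Y) (T : Y → Y) {k : ℕ}
    (P : Fin k → Set Y) (n : ℕ) : ℝ :=
  ∑ a : Fin n → Fin k, Real.negMulLog (μ (⋂ i : Fin n, T^[(i : ℕ)] ⁻¹' P (a i))).toReal

/-- The Kolmogorov–Sinai entropy of `μ`. -/
def ksEntropy [MeasurableSpace Y] (μ : Measure Y) (T : Y → Y) : EReal :=
  ⨆ (k : ℕ) (P : Fin k → Set Y)
    (_ : (∀ i, MeasurableSet (P i)) ∧ Pairwise (Function.onFun Disjoint P) ∧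
      ⋃ i, P i = Set.univ),
    ((liminf (fun n : ℕ => partitionEnt μ T P n / n) atTop : ℝ) : EReal)

/-- `d` is the distance of a metric inducing the topology of `Y`. -/
def InducesTopology [ts : TopologicalSpace Y] (d : Y → Y → ℝ) : Prop :=
  ∃ m : MetricSpace Y, m.toPseudoMetricSpace.toUniformSpace.toTopologicalSpace = ts ∧
    ∀ a b : Y, @dist Y m.toPseudoMetricSpace.toDist a b = d a b

/-- `d` is the distance of a complete metric inducing the topology of `Y`. -/
def InducesTopologyComplete [ts : TopologicalSpace Y] (d : Y → Y → ℝ) : Prop :=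
  ∃ m : MetricSpace Y, m.toPseudoMetricSpace.toUniformSpace.toTopologicalSpace = ts ∧
    (∀ a b : Y, @dist Y m.toPseudoMetricSpace.toDist a b = d a b) ∧
    @CompleteSpace Y m.toPseudoMetricSpace.toUniformSpace

/-- The upper local entropy of `μ` with respect to the distance `d`. -/
def upperLocalEnt [MeasurableSpace Y] (μ : Measure Y) (T : Y → Y) (d : Y → Y → ℝ) : EReal :=
  essSup (fun y : Y =>
    ⨆ r : {r : ℝ // 0 < r},
      limsup (fun n : ℕ =>
        ((-Real.log (μ (dynBall d T n y r.1)).toReal / n : ℝ) : EReal)) atTop) μ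

/-- The lower local entropy of `μ` with respect to the distance `d`. -/
def lowerLocalEnt [MeasurableSpace Y] (μ : Measure Y) (T : Y → Y) (d : Y → Y → ℝ) : EReal :=
  essInf (fun y : Y =>
    ⨆ r : {r : ℝ // 0 < r},
      liminf (fun n : ℕ =>
        ((-Real.log (μ (dynBall d T n y r.1)).toReal / n : ℝ) : EReal)) atTop) μ

/-- The ergodic invariant probability measures of `(Y,T)`. -/
def ErgProb [MeasurableSpace Y] (T : Y → Y) :=
  {μ : Measure Y // IsProbabilityMeasure μ ∧ Ergodic T μ}

/-- The topological entropy, defined as the supremum of the Kolmogorov–Sinai entropies of the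
ergodic invariant probability measures. -/
def topEnt [MeasurableSpace Y] (T : Y → Y) : EReal :=
  ⨆ μ : ErgProb T, ksEntropy μ.1 T

/-- The upper local entropy of the system: `sup_μ inf_d` of the upper local entropies. -/
def upperLocalEntSys [TopologicalSpace Y] [MeasurableSpace Y] (T : Y → Y) : EReal :=
  ⨆ μ : ErgProb T, ⨅ d : {d : Y → Y → ℝ // InducesTopologyComplete d},
    upperLocalEnt μ.1 T d.1

/-- The lower local entropy of the system: `sup_μ inf_d` of the lower local entropies. -/
def lowerLocalEntSys [TopologicalSpace Y] [MeasurableSpace Y] (T : Y → Y) : EReal :=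
  ⨆ μ : ErgProb T, ⨅ d : {d : Y → Y → ℝ // InducesTopologyComplete d},
    lowerLocalEnt μ.1 T d.1

/-- The invariant topological entropy: in the Bowen formula the supremum is restricted to the
compact `T`-invariant subsets. -/
def invTopEnt [TopologicalSpace Y] (T : Y → Y) : EReal :=
  ⨅ d : {d : Y → Y → ℝ // InducesTopology d},
    ⨆ K : {K : Set Y // IsCompact K ∧ T '' K = K}, covEntropy d.1 T K.1

end Dynamics

end Paper

namespace Paper

/-- `X` is a length space: the distance is the infimum of the lengths (total variations) of the
continuous paths joining two points. -/
def IsLengthSpace (X : Type*) [MetricSpace X] : Prop :=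
  ∀ x y : X, ENNReal.ofReal (dist x y) =
    ⨅ (γ : C(unitInterval, X)) (_ : γ 0 = x) (_ : γ 1 = y), eVariationOn γ Set.univ

/-- The action of an isometry `g` on continuous maps `ℝ → X` by postcomposition. -/
def smulCM {X : Type*} [MetricSpace X] (G : Type*) [Group G] [MulAction G X]
    [IsIsometricSMul G X] (g : G) (γ : C(ℝ, X)) : C(ℝ, X) :=
  ⟨fun t => g • γ t, ((isometry_smul X g).continuous).comp γ.continuous⟩

/-- The orbit equivalence relation of `Γ` on `Loc-Geod(X)`. -/
def locRel {X : Type*} [MetricSpace X] (G : Type*) [Group G] [MulAction G X]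
    [IsIsometricSMul G X] (a b : ↥(LocGeodSet X)) : Prop :=
  ∃ g : G, smulCM G g a.1 = b.1

end Paper

/-!
Discreteness and freeness give every point `x` a positive minimal displacement
`inf_{g ≠ 1} d(x, gx)`, so `π` is isometric on small balls and the translates of a small ball
are pairwise disjoint. Hence `π` is a covering map, and since `ℝ` is simply connected every
continuous line in `Γ\X` lifts, uniquely up to `Γ`; the local isometry property shows that local
geodesics correspond to local geodesics. For the topology, a line `b` whose projection is
uniformly `ε`-close to that of `a` on a compact interval `J` can be translated so that
`b(0)` is `ε`-close to `a(0)`; by the intermediate value theorem the distance `d(a(t), b(t))`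
can then never reach `ε` on `J`, since at that value it equals the quotient distance.
-/

theorem ContinuousMap.hasBasis_nhds_dist {α β : Type*} [TopologicalSpace α]
    [PseudoMetricSpace β] (f : C(α, β)) :
    (𝓝 f).HasBasis (fun p : Set α × ℝ => IsCompact p.1 ∧ 0 < p.2)
      fun p => {g | ∀ t ∈ p.1, dist (f t) (g t) < p.2} :=
  nhds_basis_uniformity' Metric.uniformity_basis_dist.compactConvergenceUniformity

theorem isInducing_quot_lift {α β : Type*} [TopologicalSpace α] [TopologicalSpace β]
    {r : α → α → Prop} {f : α → β} (hr : ∀ a b, r a b → f a = f b) (hf : Continuous f)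
    (h : ∀ a, ∀ U ∈ 𝓝 a, ∃ V ∈ 𝓝 (f a), ∀ b, f b ∈ V → ∃ b' ∈ U, Quot.mk r b = Quot.mk r b') :
    IsInducing (Quot.lift f hr) := by
  refine isInducing_iff_nhds.2 fun q => le_antisymm
    (continuous_quot_lift hr hf).continuousAt.le_comap fun N hN => ?_
  induction q using Quot.ind with | _ a => ?_
  obtain ⟨V, hV, hVU⟩ := h a _ (continuous_quot_mk.continuousAt.preimage_mem_nhds hN)
  refine mem_comap.2 ⟨V, hV, ?_⟩
  rintro q hq
  induction q using Quot.ind with | _ b => ?_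
  obtain ⟨b', hb'N, hbb'⟩ := hVU b hq
  exact hbb' ▸ hb'N

namespace Paper

def IsLocalIsometry {α β : Type*} [PseudoMetricSpace α] [PseudoMetricSpace β] (f : α → β) :
    Prop :=
  ∀ x, ∃ r > 0, ∀ y ∈ ball x r, ∀ z ∈ ball x r, dist (f y) (f z) = dist y z

section LocalIsometry

variable {α β : Type*} [PseudoMetricSpace α] [PseudoMetricSpace β] {f : α → β}

theorem IsLocalIsometry.exists_pos_of_isCompact (hf : IsLocalIsometry f) {K : Set α}
    (hK : IsCompact K) :
    ∃ δ > 0, ∀ x ∈ K, ∀ y ∈ ball x δ, ∀ z ∈ ball x δ, dist (f y) (f z) = dist y z := by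
  choose r hr hiso using hf
  obtain ⟨δ, hδ, hcover⟩ := lebesgue_number_lemma_of_metric hK (fun x => isOpen_ball)
    (fun x _ => mem_iUnion.2 ⟨x, mem_ball_self (hr x)⟩)
  refine ⟨δ, hδ, fun x hx y hy z hz => ?_⟩
  obtain ⟨c, hc⟩ := hcover x hx
  exact hiso c y (hc hy) z (hc hz)

theorem mem_locGeodSet_of_locally_dist_eq {γ : C(ℝ, α)} {γ' : C(ℝ, β)}
    (h : ∀ t, ∃ ρ > 0, ∀ s ∈ Icc (t - ρ) (t + ρ), ∀ u ∈ Icc (t - ρ) (t + ρ),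
      dist (γ' s) (γ' u) = dist (γ s) (γ u))
    (hγ : γ ∈ LocGeodSet α) : γ' ∈ LocGeodSet β := by
  intro t
  obtain ⟨ε, hε, hgeod⟩ := hγ t
  obtain ⟨ρ, hρ, hdist⟩ := h t
  have hε' : Icc (t - min ε ρ) (t + min ε ρ) ⊆ Icc (t - ε) (t + ε) :=
    Icc_subset_Icc (by linarith [min_le_left ε ρ]) (by linarith [min_le_left ε ρ])
  have hρ' : Icc (t - min ε ρ) (t + min ε ρ) ⊆ Icc (t - ρ) (t + ρ) :=
    Icc_subset_Icc (by linarith [min_le_right ε ρ]) (by linarith [min_le_right ε ρ])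
  exact ⟨min ε ρ, lt_min hε hρ, fun s hs u hu => by
    rw [hdist s (hρ' hs) u (hρ' hu), hgeod s (hε' hs) u (hε' hu)]⟩

theorem IsLocalIsometry.comp_mem_locGeodSet_iff {f : C(α, β)} (hf : IsLocalIsometry f)
    (γ : C(ℝ, α)) : f.comp γ ∈ LocGeodSet β ↔ γ ∈ LocGeodSet α := by
  have hloc : ∀ t, ∃ ρ > 0, ∀ s ∈ Icc (t - ρ) (t + ρ), ∀ u ∈ Icc (t - ρ) (t + ρ),
      dist (f (γ s)) (f (γ u)) = dist (γ s) (γ u) := by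
    intro t
    obtain ⟨r, hr, hiso⟩ := hf (γ t)
    obtain ⟨ρ, hρ, hball⟩ := Metric.mem_nhds_iff.1
      (γ.continuous.continuousAt.preimage_mem_nhds (ball_mem_nhds (γ t) hr))
    have hsub : Icc (t - ρ / 2) (t + ρ / 2) ⊆ γ ⁻¹' ball (γ t) r :=
      Real.closedBall_eq_Icc ▸ (closedBall_subset_ball (half_lt_self hρ)).trans hball
    exact ⟨ρ / 2, half_pos hρ, fun s hs u hu => hiso _ (hsub hs) _ (hsub hu)⟩
  exact ⟨mem_locGeodSet_of_locally_dist_eq fun t => (hloc t).imp fun ρ ⟨hρ, h⟩ =>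
      ⟨hρ, fun s hs u hu => (h s hs u hu).symm⟩,
    mem_locGeodSet_of_locally_dist_eq hloc⟩

theorem _root_.IsPreconnected.dist_lt_of_dist_comp_lt {T : Type*} [TopologicalSpace T]
    {J : Set T} (hJ : IsPreconnected J) {γ γ' : T → α} (hγ : ContinuousOn γ J)
    (hγ' : ContinuousOn γ' J) {δ ε : ℝ} (hεδ : ε < δ)
    (hiso : ∀ x ∈ γ '' J, ∀ y ∈ ball x δ, ∀ z ∈ ball x δ, dist (f y) (f z) = dist y z)
    {t₀ : T} (ht₀ : t₀ ∈ J) (h₀ : dist (γ t₀) (γ' t₀) < ε)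
    (hclose : ∀ t ∈ J, dist (f (γ t)) (f (γ' t)) < ε) :
    ∀ t ∈ J, dist (γ t) (γ' t) < ε := by
  intro t ht
  by_contra! hεt
  obtain ⟨s, hs, hds⟩ := hJ.intermediate_value ht₀ ht
    (continuous_dist.comp_continuousOn (hγ.prodMk hγ')) ⟨h₀.le, hεt⟩
  have hδ : 0 < δ := (dist_nonneg.trans_lt h₀).trans hεδ
  have hiso_s := hiso _ (mem_image_of_mem γ hs) _ (mem_ball_self hδ) _
    (by rw [mem_ball']; exact hds.trans_lt hεδ)
  exact (hclose s hs).ne (hiso_s.trans hds)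

end LocalIsometry

section QuotientMetric

variable {X : Type*} [MetricSpace X] (G : Type*) [Group G] [MulAction G X]

theorem projQ_eq_projQ_iff {x y : X} : projQ G x = projQ G y ↔ ∃ g : G, g • y = x :=
  Quotient.eq.trans (MulAction.orbitRel_apply.trans MulAction.mem_orbit_iff)

theorem projQ_smul (g : G) (x : X) : projQ G (g • x) = projQ G x :=
  (projQ_eq_projQ_iff G).2 ⟨g, rfl⟩

theorem projQ_surjective : Function.Surjective (projQ (X := X) G) :=
  Quotient.mk_surjective

variable [IsIsometricSMul G X]

theorem dist_projQ (x y : X) : dist (projQ G x) (projQ G y) = ⨅ g : G, dist x (g • y) := by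
  obtain ⟨k, hk⟩ := (projQ_eq_projQ_iff G).1 (Quotient.out_eq (projQ G x))
  obtain ⟨l, hl⟩ := (projQ_eq_projQ_iff G).1 (Quotient.out_eq (projQ G y))
  change ⨅ g : G, dist (projQ G x).out (g • (projQ G y).out) = _
  rw [← hk, ← hl]
  refine ((Equiv.mulLeft k⁻¹).trans (Equiv.mulRight l)).iInf_congr fun g => ?_
  rw [← dist_smul k]
  simp only [Equiv.trans_apply, Equiv.coe_mulLeft, Equiv.coe_mulRight, mul_smul, smul_inv_smul]

theorem exists_dist_smul_lt_of_dist_projQ_lt {x y : X} {r : ℝ}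
    (h : dist (projQ G x) (projQ G y) < r) : ∃ g : G, dist x (g • y) < r :=
  exists_lt_of_ciInf_lt (dist_projQ G x y ▸ h)

theorem isOpenMap_projQ : IsOpenMap (projQ (X := X) G) := by
  refine fun U hU => Metric.isOpen_iff.2 ?_
  rintro _ ⟨x, hxU, rfl⟩
  obtain ⟨ε, hε, hball⟩ := Metric.isOpen_iff.1 hU x hxU
  refine ⟨ε, hε, fun q hq => ?_⟩
  obtain ⟨y, rfl⟩ := projQ_surjective G q
  obtain ⟨g, hg⟩ := exists_dist_smul_lt_of_dist_projQ_lt G (mem_ball'.1 hq)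
  exact ⟨g • y, hball (mem_ball'.2 hg), projQ_smul G g y⟩

theorem isQuotientMap_projQ : IsQuotientMap (projQ (X := X) G) :=
  (isOpenMap_projQ G).isQuotientMap (projCM G).continuous (projQ_surjective G)

end QuotientMetric

section DiscreteFree

variable {X : Type*} [MetricSpace X] {G : Type*} [Group G] [MulAction G X]

theorem exists_pos_le_dist_smul (hdisc : DiscreteAction G X) (hfree : FreeAction G X) (x : X) :
    ∃ δ > 0, ∀ g : G, g ≠ 1 → δ ≤ dist x (g • x) := by
  set F := {g : G | g ≠ 1 ∧ dist x (g • x) ≤ 1}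
  have hF : F.Finite := (hdisc x 1).subset fun g hg => hg.2
  have hpos : ∀ g ∈ F, 0 < dist x (g • x) := fun g hg =>
    dist_pos.2 fun h => hg.1 (hfree g x h.symm)
  have hsmall : ∀ᶠ δ in 𝓝[>] (0 : ℝ), (∀ g ∈ F, δ ≤ dist x (g • x)) ∧ δ ≤ 1 :=
    nhdsWithin_le_nhds <| ((eventually_all_finite hF).2 fun g hg =>
      eventually_le_nhds (hpos g hg)).and (eventually_le_nhds one_pos)
  obtain ⟨δ, ⟨hδF, hδ1⟩, hδ⟩ := (hsmall.and self_mem_nhdsWithin).exists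
  refine ⟨δ, hδ, fun g hg => ?_⟩
  by_cases hgF : dist x (g • x) ≤ 1
  · exact hδF g ⟨hg, hgF⟩
  · linarith

variable [IsIsometricSMul G X]

theorem isLocalIsometry_projQ (hdisc : DiscreteAction G X) (hfree : FreeAction G X) :
    IsLocalIsometry (projQ (X := X) G) := by
  intro x
  obtain ⟨δ, hδ, hsep⟩ := exists_pos_le_dist_smul hdisc hfree x
  refine ⟨δ / 4, by positivity, fun y hy z hz => le_antisymm (projQ_dist_le G y z) ?_⟩
  rw [mem_ball] at hy hz
  rw [dist_projQ]
  refine le_ciInf fun g => ?_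
  rcases eq_or_ne g 1 with rfl | hg
  · rw [one_smul]
  · have hx := dist_triangle4 x y (g • z) (g • x)
    rw [dist_smul] at hx
    linarith [hsep g hg, dist_comm x y, dist_triangle_right y z x]

theorem isQuotientCoveringMap_projQ (hdisc : DiscreteAction G X) (hfree : FreeAction G X) :
    IsQuotientCoveringMap (projQ (X := X) G) G where
  toIsQuotientMap := isQuotientMap_projQ G
  toContinuousConstSMul := inferInstance
  apply_eq_iff_mem_orbit := (projQ_eq_projQ_iff G).trans MulAction.mem_orbit_iff.symm
  disjoint x := by
    obtain ⟨δ, hδ, hsep⟩ := exists_pos_le_dist_smul hdisc hfree x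
    refine ⟨ball x (δ / 2), ball_mem_nhds x (by positivity), ?_⟩
    rintro g ⟨_, ⟨y, hy, rfl⟩, hgy⟩
    by_contra hg
    have hx := dist_triangle x (g • y) (g • x)
    rw [dist_smul] at hx
    linarith [hsep g hg, mem_ball.1 hy, mem_ball'.1 hgy]

end DiscreteFree

section Lines

variable {X : Type*} [MetricSpace X] {G : Type*} [Group G] [MulAction G X]
  [IsIsometricSMul G X]

variable (G) in
theorem continuous_projComp : Continuous (projComp G (X := X)) :=
  ContinuousMap.continuous_postcomp _

variable (G) in
theorem projComp_smulCM (g : G) (γ : C(ℝ, X)) : projComp G (smulCM G g γ) = projComp G γ :=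
  ContinuousMap.ext fun t => projQ_smul G g (γ t)

theorem smulCM_mem_locGeodSet (g : G) {γ : C(ℝ, X)} (hγ : γ ∈ LocGeodSet X) :
    smulCM G g γ ∈ LocGeodSet X :=
  mem_locGeodSet_of_locally_dist_eq (fun _ => ⟨1, one_pos, fun _ _ _ _ => dist_smul g _ _⟩) hγ

theorem projComp_mem_locGeodSet_iff (hdisc : DiscreteAction G X) (hfree : FreeAction G X)
    (γ : C(ℝ, X)) : projComp G γ ∈ LocGeodSet (QuotX G X) ↔ γ ∈ LocGeodSet X :=
  IsLocalIsometry.comp_mem_locGeodSet_iff (f := projCM G) (isLocalIsometry_projQ hdisc hfree) γ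

theorem exists_projComp_eq (hdisc : DiscreteAction G X) (hfree : FreeAction G X)
    (η : C(ℝ, QuotX G X)) : ∃ γ : C(ℝ, X), projComp G γ = η := by
  obtain ⟨x₀, hx₀⟩ := projQ_surjective G (η 0)
  obtain ⟨γ, -, hγ⟩ := ((isQuotientCoveringMap_projQ hdisc hfree).isCoveringMap
    |>.existsUnique_continuousMap_lifts η 0 x₀ hx₀).exists
  exact ⟨γ, ContinuousMap.ext (congrFun hγ)⟩

theorem exists_smulCM_eq_of_projComp_eq (hdisc : DiscreteAction G X) (hfree : FreeAction G X)
    {γ γ' : C(ℝ, X)} (h : projComp G γ = projComp G γ') : ∃ g : G, smulCM G g γ = γ' := by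
  obtain ⟨g, hg⟩ := (projQ_eq_projQ_iff G).1 (congrArg (· 0) h).symm
  refine ⟨g, ContinuousMap.ext <| congrFun <|
    (isQuotientCoveringMap_projQ hdisc hfree).isCoveringMap.eq_of_comp_eq
      (smulCM G g γ).continuous γ'.continuous ?_ 0 hg⟩
  funext t
  exact (projQ_smul G g (γ t)).trans (congrArg (· t) h)

theorem exists_smulCM_mem_of_projComp_mem_nhds (hdisc : DiscreteAction G X)
    (hfree : FreeAction G X) (a : C(ℝ, X)) {U : Set C(ℝ, X)} (hU : U ∈ 𝓝 a) :
    ∃ V ∈ 𝓝 (projComp G a), ∀ b, projComp G b ∈ V → ∃ g : G, smulCM G g b ∈ U := by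
  obtain ⟨⟨K, ε₀⟩, ⟨hK, hε₀⟩, hKU⟩ := (ContinuousMap.hasBasis_nhds_dist a).mem_iff.1 hU
  obtain ⟨R, hR, hKR⟩ := hK.isBounded.subset_closedBall_lt 0 0
  obtain ⟨δ, hδ, hiso⟩ := (isLocalIsometry_projQ hdisc hfree).exists_pos_of_isCompact
    ((isCompact_closedBall (0 : ℝ) R).image a.continuous)
  set ε := min ε₀ (δ / 2)
  have hε : 0 < ε := lt_min hε₀ (half_pos hδ)
  refine ⟨_, (ContinuousMap.hasBasis_nhds_dist _).mem_of_mem (i := (closedBall 0 R, ε))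
    ⟨isCompact_closedBall 0 R, hε⟩, fun b hb => ?_⟩
  have h0 : (0 : ℝ) ∈ closedBall 0 R := mem_closedBall_self hR.le
  obtain ⟨g, hg⟩ := exists_dist_smul_lt_of_dist_projQ_lt G (hb 0 h0)
  have hclose := (convex_closedBall (0 : ℝ) R).isPreconnected.dist_lt_of_dist_comp_lt
    a.continuous.continuousOn (smulCM G g b).continuous.continuousOn
    ((min_le_right _ _).trans_lt (half_lt_self hδ)) hiso h0 hg
    fun t ht => (projQ_smul G g (b t)).symm ▸ hb t ht
  exact ⟨g, hKU fun t ht => (hclose t (hKR ht)).trans_le (min_le_left _ _)⟩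

variable (G) in
/-- The map `Π̄ : Γ\Loc-Geod(X) → C(ℝ, Γ\X)` induced by `Π = projComp G`. -/
def projCompQuot : Quot (locRel G (X := X)) → C(ℝ, QuotX G X) :=
  Quot.lift (fun a => projComp G a.1) fun _ _ ⟨g, hg⟩ => hg ▸ (projComp_smulCM G g _).symm

theorem isEmbedding_projCompQuot (hdisc : DiscreteAction G X) (hfree : FreeAction G X) :
    IsEmbedding (projCompQuot G (X := X)) := by
  refine ⟨isInducing_quot_lift _ ((continuous_projComp G).comp continuous_subtype_val)
    fun a U hU => ?_, ?_⟩
  · obtain ⟨U', hU', hU'U⟩ := (mem_nhds_subtype _ a U).1 hU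
    obtain ⟨V, hV, hVU'⟩ := exists_smulCM_mem_of_projComp_mem_nhds hdisc hfree a.1 hU'
    refine ⟨V, hV, fun b hb => ?_⟩
    obtain ⟨g, hg⟩ := hVU' b.1 hb
    exact ⟨⟨_, smulCM_mem_locGeodSet g b.2⟩, hU'U hg, Quot.sound ⟨g, rfl⟩⟩
  · rintro ⟨a⟩ ⟨b⟩ h
    obtain ⟨g, hg⟩ := exists_smulCM_eq_of_projComp_eq hdisc hfree h
    exact Quot.sound ⟨g, hg⟩

theorem range_projCompQuot (hdisc : DiscreteAction G X) (hfree : FreeAction G X) :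
    range (projCompQuot G (X := X)) = LocGeodSet (QuotX G X) := by
  refine Subset.antisymm ?_ fun η hη => ?_
  · rintro _ ⟨⟨a⟩, rfl⟩
    exact (projComp_mem_locGeodSet_iff hdisc hfree a.1).2 a.2
  · obtain ⟨γ, rfl⟩ := exists_projComp_eq hdisc hfree η
    exact ⟨Quot.mk _ ⟨γ, (projComp_mem_locGeodSet_iff hdisc hfree γ).1 hη⟩, rfl⟩

end Lines

end Paper

open Paper in
theorem statement_12_general {X : Type*} [MetricSpace X]
    (G : Type*) [Group G] [MulAction G X] [IsIsometricSMul G X]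
    (hdisc : DiscreteAction G X) (hfree : FreeAction G X) :
    (∀ γ ∈ LocGeodSet X, projComp G γ ∈ LocGeodSet (QuotX G X)) ∧
    Continuous (fun γ : ↥(LocGeodSet X) => projComp G γ.1) ∧
    (∀ (g : G) (γ : C(ℝ, X)), projComp G (smulCM G g γ) = projComp G γ) ∧
    (∀ η ∈ LocGeodSet (QuotX G X), ∃ γ ∈ LocGeodSet X, projComp G γ = η) ∧
    ∃ F : Quot (locRel G (X := X)) → C(ℝ, QuotX G X),
      (∀ a : ↥(LocGeodSet X), F (Quot.mk _ a) = projComp G a.1) ∧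
      IsEmbedding F ∧ Set.range F = LocGeodSet (QuotX G X) := by
  have hlocGeod := projComp_mem_locGeodSet_iff hdisc hfree
  refine ⟨fun γ hγ => (hlocGeod γ).2 hγ, (continuous_projComp G).comp continuous_subtype_val,
    projComp_smulCM G, fun η hη => ?_, projCompQuot G, fun _ => rfl,
    isEmbedding_projCompQuot hdisc hfree, range_projCompQuot hdisc hfree⟩
  obtain ⟨γ, rfl⟩ := exists_projComp_eq hdisc hfree η
  exact ⟨γ, (hlocGeod γ).1 hη, rfl⟩

open Paper in
/-- Let `Γ = G` be a group of isometries of a proper length metric space `X`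
acting discretely and freely. Then `Π : Loc-Geod(X) → Loc-Geod(Γ\X)`, `Π(γ) = π∘γ`, is
continuous, surjective and `Γ`-equivariant, and the induced map
`Γ\Loc-Geod(X) → Loc-Geod(Γ\X)` is a homeomorphism (an embedding with image
`Loc-Geod(Γ\X)`). -/
theorem statement_12 {X : Type*} [MetricSpace X] [ProperSpace X] (hlen : IsLengthSpace X)
    (G : Type*) [Group G] [MulAction G X] [IsIsometricSMul G X]
    (hdisc : DiscreteAction G X) (hfree : FreeAction G X) :
    (∀ γ ∈ LocGeodSet X, projComp G γ ∈ LocGeodSet (QuotX G X)) ∧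
    Continuous (fun γ : ↥(LocGeodSet X) => projComp G γ.1) ∧
    (∀ (g : G) (γ : C(ℝ, X)), projComp G (smulCM G g γ) = projComp G γ) ∧
    (∀ η ∈ LocGeodSet (QuotX G X), ∃ γ ∈ LocGeodSet X, projComp G γ = η) ∧
    ∃ F : Quot (locRel G (X := X)) → C(ℝ, QuotX G X),
      (∀ a : ↥(LocGeodSet X), F (Quot.mk _ a) = projComp G a.1) ∧
      IsEmbedding F ∧ Set.range F = LocGeodSet (QuotX G X) :=
  statement_12_general G hdisc hfree
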